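/- The family (P^{(i)}(t)³)_{i ∈ ℤ, i odd} is summable in ℚ[[t]] (for each exponent, only finitely many members have a nonzero coefficient of that exponent), and Σ_{i ∈ ℤ, i odd} P^{(i)}(t)³ = 2·B³·(1+U)³·(1−U³)^{−1} in ℚ[[t]]. -/

import Mathlib

open PowerSeries Finset

/-- `walkCount n i` is the number of sequences `(s_1, …, s_n) ∈ {−1,+1}^n`
with `s_1 + ⋯ + s_n = i`. -/
def walkCount (n : ℕ) (i : ℤ) : ℕ :=
  (Finset.univ.filter
    (fun s : Fin n → Bool => (∑ k, (if s k then (1 : ℤ) else -1)) = i)).card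

lemma card_fun_trues (n t : ℕ) :
    (Finset.univ.filter fun s : Fin n → Bool =>
      (Finset.univ.filter fun k => s k = true).card = t).card = n.choose t := by
  have key : (Finset.univ.filter fun s : Fin n → Bool =>
      (Finset.univ.filter fun k => s k = true).card = t).card
      = ((Finset.univ : Finset (Fin n)).powersetCard t).card := by
    apply Finset.card_bij (fun s _ => Finset.univ.filter fun k => s k = true)
    · intro s hs
      simp only [Finset.mem_filter, Finset.mem_univ, true_and] at hs
      simp [Finset.mem_powersetCard, hs]
    · intro s hs s' hs' h
      funext k
      have h2 : s k = true ↔ s' k = true := by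
        simpa using Finset.ext_iff.1 h k
      cases hsk : s k <;> cases hsk' : s' k <;> simp_all
    · intro A hA
      refine ⟨fun k => decide (k ∈ A), ?_, ?_⟩
      · simp only [Finset.mem_filter, Finset.mem_univ, true_and]
        rw [Finset.mem_powersetCard] at hA
        rw [← hA.2]
        congr 1
        ext k; simp
      · ext k; simp
  rw [key, Finset.card_powersetCard, Finset.card_univ, Fintype.card_fin]

lemma walk_sum {n : ℕ} (s : Fin n → Bool) :
    (∑ k, (if s k then (1 : ℤ) else -1))
      = 2 * ((Finset.univ.filter fun k => s k = true).card : ℤ) - n := by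
  have : ∀ k, (if s k then (1 : ℤ) else -1) = 2 * (if s k = true then (1:ℤ) else 0) - 1 := by
    intro k; cases s k <;> simp
  rw [Finset.sum_congr rfl fun k _ => this k, Finset.sum_sub_distrib, ← Finset.mul_sum,
    Finset.sum_boole, Finset.sum_const, Finset.card_univ, Fintype.card_fin]
  simp

lemma walkCount_eq {n t : ℕ} {i : ℤ} (h : (n : ℤ) + i = 2 * t) :
    walkCount n i = n.choose t := by
  rw [walkCount, ← card_fun_trues n t]
  congr 1
  apply Finset.filter_congr
  intro s _
  rw [walk_sum s]
  constructor
  · intro hs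
    have : (t : ℤ) = ((Finset.univ.filter fun k => s k = true).card : ℤ) := by omega
    exact_mod_cast this.symm
  · intro hs; rw [hs]; omega

lemma walkCount_eq_zero {n : ℕ} {i : ℤ} (h : ∀ t : ℕ, (n : ℤ) + i ≠ 2 * t) :
    walkCount n i = 0 := by
  rw [walkCount, Finset.card_eq_zero, Finset.filter_eq_empty_iff]
  intro s _
  rw [walk_sum s]
  intro hs
  exact h ((Finset.univ.filter fun k => s k = true).card) (by omega)

/-- `P i = Σ_{n ≥ 0} p_{n,i} t^{⌊n/2⌋}`: the coefficient of `t^m` picks up the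
contributions of `n = 2m` and `n = 2m+1` (at most one of each parity is nonzero). -/
noncomputable def P (i : ℤ) : PowerSeries ℚ :=
  PowerSeries.mk fun m => ((walkCount (2 * m) i + walkCount (2 * m + 1) i : ℕ) : ℚ)

noncomputable def Q (j : ℕ) : PowerSeries ℚ :=
  PowerSeries.mk fun m => (((2 * m + 1).choose (m + 1 + j) : ℕ) : ℚ)

noncomputable def F (r : ℕ) : PowerSeries ℚ :=
  PowerSeries.mk fun m => (((2 * m + r).choose m : ℕ) : ℚ)

lemma P_pos (j : ℕ) : P (2 * j + 1 : ℤ) = Q j := by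
  ext m
  rw [P, Q, coeff_mk, coeff_mk]
  rw [walkCount_eq_zero (by intro t; push_cast; omega),
    walkCount_eq (t := m + 1 + j) (by push_cast; ring)]
  simp

lemma P_neg (j : ℕ) : P (-(2 * j + 1) : ℤ) = Q j := by
  ext m
  rw [P, Q, coeff_mk, coeff_mk]
  rw [walkCount_eq_zero (by intro t; push_cast; omega)]
  rcases le_or_gt j m with hjm | hjm
  · rw [walkCount_eq (t := m - j) (by push_cast; omega)]
    have h1 : m - j = (2 * m + 1) - (m + 1 + j) := by omega
    rw [h1, Nat.choose_symm (by omega)]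
    simp
  · rw [walkCount_eq_zero (by intro t; push_cast; omega),
      Nat.choose_eq_zero_of_lt (by omega)]

lemma Q_eq (j : ℕ) : Q j = X ^ j * F (2 * j + 1) := by
  ext m
  rw [Q, coeff_mk, PowerSeries.coeff_X_pow_mul' (F (2 * j + 1)) j m]
  rcases le_or_gt j m with hjm | hjm
  · rw [if_pos hjm, F, coeff_mk]
    have h2 : 2 * (m - j) + (2 * j + 1) = 2 * m + 1 := by omega
    have h3 : (2 * m + 1).choose (m - j) = (2 * m + 1).choose (m + 1 + j) := by
      have h1 : m - j = (2 * m + 1) - (m + 1 + j) := by omega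
      rw [h1, Nat.choose_symm (by omega)]
    rw [h2, h3]
  · rw [if_neg (by omega), Nat.choose_eq_zero_of_lt (by omega)]
    simp

lemma F_zero_eq : F 0 = 1 + X * F 1 + X * F 1 := by
  ext m
  cases m with
  | zero =>
    simp [F, coeff_mk, PowerSeries.coeff_zero_eq_constantCoeff]
  | succ m =>
    have key : (2 * (m + 1)).choose (m + 1) = 2 * ((2 * m + 1).choose m) := by
      have h1 : 2 * (m + 1) = (2 * m + 1) + 1 := by ring
      rw [h1, Nat.choose_succ_succ, Nat.choose_symm_half]
      ring
    simp only [map_add, PowerSeries.coeff_one, if_neg (Nat.succ_ne_zero m),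
      coeff_succ_X_mul, F, coeff_mk, Nat.add_zero, key]
    push_cast
    ring

lemma F_rec (r : ℕ) : F (r + 1) = F r + X * F (r + 2) := by
  ext m
  cases m with
  | zero =>
    simp [F, coeff_mk, PowerSeries.coeff_zero_eq_constantCoeff]
  | succ m =>
    rw [map_add, coeff_succ_X_mul, F, F, F, coeff_mk, coeff_mk, coeff_mk]
    have key : (2 * (m + 1) + (r + 1)).choose (m + 1)
        = (2 * (m + 1) + r).choose (m + 1) + (2 * m + (r + 2)).choose m := by
      have h1 : 2 * (m + 1) + (r + 1) = (2 * m + r + 2) + 1 := by ring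
      have h2 : 2 * (m + 1) + r = 2 * m + r + 2 := by ring
      have h3 : 2 * m + (r + 2) = 2 * m + r + 2 := by ring
      rw [h1, h2, h3, Nat.choose_succ_succ]
      ring
    rw [key]
    push_cast
    ring

lemma F0_ODE : (1 - 4 * X) * d⁄dX ℚ (F 0) = 2 * F 0 := by
  have c4 : ((4 : ℚ⟦X⟧)) = PowerSeries.C (R := ℚ) 4 := (map_ofNat (PowerSeries.C (R := ℚ)) 4).symm
  have c2 : ((2 : ℚ⟦X⟧)) = PowerSeries.C (R := ℚ) 2 := (map_ofNat (PowerSeries.C (R := ℚ)) 2).symm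
  have expand : (1 - 4 * X) * d⁄dX ℚ (F 0)
      = d⁄dX ℚ (F 0) - (PowerSeries.C (R := ℚ) 4) * (X * d⁄dX ℚ (F 0)) := by
    rw [← c4]; ring
  rw [expand]
  ext m
  rw [map_sub, PowerSeries.coeff_C_mul, coeff_derivative, c2, PowerSeries.coeff_C_mul]
  cases m with
  | zero =>
    have h0 : coeff 0 (X * d⁄dX ℚ (F 0)) = 0 := by
      rw [PowerSeries.coeff_zero_eq_constantCoeff, map_mul, constantCoeff_X, zero_mul]
    rw [h0, F, coeff_mk, coeff_mk]
    norm_num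
  | succ m =>
    rw [coeff_succ_X_mul, coeff_derivative]
    have key := Nat.succ_mul_centralBinom_succ (m + 1)
    rw [Nat.centralBinom, Nat.centralBinom] at key
    simp only [F, coeff_mk, Nat.add_zero]
    have keyQ : ((m : ℚ) + 1 + 1) * (((2 * (m + 1 + 1)).choose (m + 1 + 1) : ℕ) : ℚ)
        = 2 * (2 * ((m:ℚ) + 1) + 1) * (((2 * (m + 1)).choose (m + 1) : ℕ) : ℚ) := by
      exact_mod_cast congrArg (Nat.cast (R := ℚ)) key
    push_cast
    linear_combination keyQ

lemma ode_coeff {h : ℚ⟦X⟧} (hh : (1 - 4 * X) * d⁄dX ℚ h = 2 * h) (n : ℕ) :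
    ((n : ℚ) + 1) * coeff (n + 1) h = (4 * n + 2) * coeff n h := by
  have c4 : ((4 : ℚ⟦X⟧)) = PowerSeries.C (R := ℚ) 4 := (map_ofNat (PowerSeries.C (R := ℚ)) 4).symm
  have c2 : ((2 : ℚ⟦X⟧)) = PowerSeries.C (R := ℚ) 2 := (map_ofNat (PowerSeries.C (R := ℚ)) 2).symm
  have expand : d⁄dX ℚ h = PowerSeries.C (R := ℚ) 2 * h + PowerSeries.C (R := ℚ) 4 * (X * d⁄dX ℚ h) := by
    rw [← c4, ← c2]; linear_combination hh
  have hc := congrArg (coeff n) expand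
  rw [coeff_derivative, map_add, PowerSeries.coeff_C_mul, PowerSeries.coeff_C_mul] at hc
  cases n with
  | zero =>
    have h0 : coeff 0 (X * d⁄dX ℚ h) = 0 := by
      rw [PowerSeries.coeff_zero_eq_constantCoeff, map_mul, constantCoeff_X, zero_mul]
    rw [h0] at hc
    push_cast
    linear_combination hc
  | succ n =>
    rw [coeff_succ_X_mul, coeff_derivative] at hc
    push_cast at hc ⊢
    linear_combination hc

lemma ode_unique {f g : ℚ⟦X⟧} (hf : (1 - 4 * X) * d⁄dX ℚ f = 2 * f)
    (hg : (1 - 4 * X) * d⁄dX ℚ g = 2 * g) (h0 : coeff 0 f = coeff 0 g) : f = g := by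
  ext n
  induction n with
  | zero => exact h0
  | succ n ih =>
    have hne : ((n : ℚ) + 1) ≠ 0 := by positivity
    apply mul_left_cancel₀ hne
    rw [ode_coeff hf n, ode_coeff hg n, ih]


variable {U : ℚ⟦X⟧}

lemma one_sub_ne (hU0 : constantCoeff U = 0) : (1 - U) ≠ 0 := by
  intro h
  have := congrArg (constantCoeff) h
  rw [map_sub, map_one, hU0, map_zero] at this
  norm_num at this

lemma hInv (hU0 : constantCoeff U = 0) : (1 - U) * (1 - U)⁻¹ = 1 :=
  PowerSeries.mul_inv_cancel _ (by rw [map_sub, map_one, hU0]; norm_num)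

lemma key1 (hU : U = X * (1 + U) ^ 2) : (1 - U) ^ 2 = (1 + U) ^ 2 * (1 - 4 * X) := by
  linear_combination (-4 : ℚ⟦X⟧) * hU

lemma hdU (hU : U = X * (1 + U) ^ 2) : (d⁄dX ℚ U) * (1 - 2 * X * (1 + U)) = (1 + U) ^ 2 := by
  have e1 : d⁄dX ℚ (1 + U) = d⁄dX ℚ U := by
    rw [map_add, Derivation.map_one_eq_zero, zero_add]
  have e2 : d⁄dX ℚ ((1 + U) ^ 2) = 2 * (1 + U) * d⁄dX ℚ U := by
    rw [pow_two, Derivation.leibniz, e1]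
    simp only [smul_eq_mul]
    ring
  have e3 : d⁄dX ℚ U = X * (2 * (1 + U) * d⁄dX ℚ U) + (1 + U) ^ 2 := by
    conv_lhs => rw [hU]
    rw [Derivation.leibniz, e2, derivative_X]
    simp only [smul_eq_mul]
    ring
  linear_combination e3

lemma hC3 (hU : U = X * (1 + U) ^ 2) : (1 - U) * d⁄dX ℚ U = (1 + U) ^ 3 := by
  linear_combination (1 + U) * hdU hU - 2 * (d⁄dX ℚ U) * hU

lemma hODEU (hU0 : constantCoeff U = 0) (hU : U = X * (1 + U) ^ 2) :
    (1 - 4 * X) * d⁄dX ℚ U = 1 - U ^ 2 := by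
  apply mul_right_cancel₀ (pow_ne_zero 2 (one_sub_ne hU0))
  linear_combination ((1 - 4 * X) * (1 - U)) * hC3 hU - ((1 + U) * (1 - U)) * key1 hU

lemma hdI : d⁄dX ℚ (1 - U)⁻¹ = (1 - U)⁻¹ ^ 2 * d⁄dX ℚ U := by
  rw [PowerSeries.derivative_inv', map_sub, Derivation.map_one_eq_zero, zero_sub]
  ring

lemma hODEB (hU0 : constantCoeff U = 0) (hU : U = X * (1 + U) ^ 2) :
    (1 - 4 * X) * d⁄dX ℚ ((1 + U) * (1 - U)⁻¹) = 2 * ((1 + U) * (1 - U)⁻¹) := by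
  have e1 : d⁄dX ℚ (1 + U) = d⁄dX ℚ U := by
    rw [map_add, Derivation.map_one_eq_zero, zero_add]
  rw [Derivation.leibniz, hdI, e1]
  have expand : (1 + U) • ((1 - U)⁻¹ ^ 2 * d⁄dX ℚ U) + (1 - U)⁻¹ • d⁄dX ℚ U
      = (1 + U) * ((1 - U)⁻¹ ^ 2 * d⁄dX ℚ U) + (1 - U)⁻¹ * d⁄dX ℚ U := by
    rw [smul_eq_mul, smul_eq_mul]
  rw [expand]
  linear_combination ((1 + U) * ((1 - U)⁻¹) ^ 2 + (1 - U)⁻¹) * hODEU hU0 hU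
    + ((1 + U) ^ 2 * (1 - U)⁻¹) * hInv hU0

lemma F0B (hU0 : constantCoeff U = 0) (hU : U = X * (1 + U) ^ 2) :
    F 0 = (1 + U) * (1 - U)⁻¹ := by
  apply ode_unique F0_ODE (hODEB hU0 hU)
  have hR : constantCoeff ((1 + U) * (1 - U)⁻¹) = 1 := by
    rw [map_mul, map_add, map_one, hU0, PowerSeries.constantCoeff_inv, map_sub, map_one, hU0]
    norm_num
  have hL : constantCoeff (F 0) = 1 := by
    rw [F, ← PowerSeries.coeff_zero_eq_constantCoeff, coeff_mk]
    norm_num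
  rw [PowerSeries.coeff_zero_eq_constantCoeff_apply, PowerSeries.coeff_zero_eq_constantCoeff_apply, hL, hR]

lemma X_ne : (X : ℚ⟦X⟧) ≠ 0 := by
  intro h
  have := congrArg (coeff 1) h
  rw [PowerSeries.coeff_one_X, map_zero] at this
  norm_num at this

lemma F1B (hU0 : constantCoeff U = 0) (hU : U = X * (1 + U) ^ 2) :
    F 1 = (1 + U) * (1 - U)⁻¹ * (1 + U) := by
  have two_ne : (2 : ℚ⟦X⟧) ≠ 0 := by
    intro h
    have := congrArg (constantCoeff) h
    rw [map_ofNat, map_zero] at this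
    norm_num at this
  apply mul_left_cancel₀ two_ne
  apply mul_left_cancel₀ X_ne
  have e : X * (F 1 + F 1)
      = X * ((1 + U) * (1 - U)⁻¹ * (1 + U) + (1 + U) * (1 - U)⁻¹ * (1 + U)) := by
    linear_combination F0B hU0 hU - F_zero_eq + 2 * (1 - U)⁻¹ * hU + hInv hU0
  linear_combination e

lemma F_BC (hU0 : constantCoeff U = 0) (hU : U = X * (1 + U) ^ 2) :
    ∀ r : ℕ, F r = (1 + U) * (1 - U)⁻¹ * (1 + U) ^ r := by
  have main : ∀ r : ℕ, F r = (1 + U) * (1 - U)⁻¹ * (1 + U) ^ r ∧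
      F (r + 1) = (1 + U) * (1 - U)⁻¹ * (1 + U) ^ (r + 1) := by
    intro r
    induction r with
    | zero => exact ⟨by rw [F0B hU0 hU]; ring, by rw [F1B hU0 hU]; ring⟩
    | succ r ih =>
      obtain ⟨h1, h2⟩ := ih
      refine ⟨h2, ?_⟩
      apply mul_left_cancel₀ X_ne
      linear_combination (-1 : ℚ⟦X⟧) * F_rec r + h2 - h1
        + ((1 + U) * (1 - U)⁻¹ * (1 + U) ^ r) * hU
  exact fun r => (main r).1

lemma odd_rep {i : ℤ} (h : Odd i) :
    ∃ j : ℕ, i = 2 * (j : ℤ) + 1 ∨ i = -(2 * (j : ℤ) + 1) := by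
  obtain ⟨k, hk⟩ := h
  rcases le_or_gt 0 k with h' | h'
  · exact ⟨k.toNat, Or.inl (by omega)⟩
  · exact ⟨(-k - 1).toNat, Or.inr (by omega)⟩

lemma P_rep {i : ℤ} {j : ℕ} (hij : i = 2 * (j : ℤ) + 1 ∨ i = -(2 * (j : ℤ) + 1)) :
    P i = X ^ j * F (2 * j + 1) := by
  rcases hij with h | h
  · rw [← Q_eq, h, ← P_pos]
  · rw [← Q_eq, h, ← P_neg]

lemma P_cube_X {U : ℚ⟦X⟧} (hU0 : constantCoeff U = 0) (hU : U = X * (1 + U) ^ 2)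
    {i : ℤ} {j : ℕ} (hij : i = 2 * (j : ℤ) + 1 ∨ i = -(2 * (j : ℤ) + 1)) :
    P i ^ 3 = X ^ (3 * j) * (((1 + U) * (1 - U)⁻¹) ^ 3 * (1 + U) ^ (6 * j + 3)) := by
  rw [P_rep hij, F_BC hU0 hU]
  rw [mul_pow, ← pow_mul]
  rw [show j * 3 = 3 * j by ring]
  congr 1
  rw [mul_pow, mul_pow, ← pow_mul]
  rw [show (2 * j + 1) * 3 = 6 * j + 3 by ring]

lemma P_cube {U : ℚ⟦X⟧} (hU0 : constantCoeff U = 0) (hU : U = X * (1 + U) ^ 2)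
    {i : ℤ} {j : ℕ} (hij : i = 2 * (j : ℤ) + 1 ∨ i = -(2 * (j : ℤ) + 1)) :
    P i ^ 3 = ((1 + U) * (1 - U)⁻¹) ^ 3 * (1 + U) ^ 3 * (U ^ 3) ^ j := by
  rw [P_cube_X hU0 hU hij]
  have hUj : (U ^ 3) ^ j = X ^ (3 * j) * (1 + U) ^ (6 * j) := by
    conv_lhs => rw [hU]
    rw [← pow_mul, mul_pow, ← pow_mul, show 2 * (3 * j) = 6 * j by ring]
  rw [hUj]
  ring

lemma coeff_P_cube_vanish {U : ℚ⟦X⟧} (hU0 : constantCoeff U = 0)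
    (hU : U = X * (1 + U) ^ 2)
    {i : ℤ} {j : ℕ} (hij : i = 2 * (j : ℤ) + 1 ∨ i = -(2 * (j : ℤ) + 1))
    {m : ℕ} (hm : m < 3 * j) : coeff m (P i ^ 3) = 0 := by
  rw [P_cube_X hU0 hU hij, PowerSeries.coeff_X_pow_mul', if_neg (by omega)]

lemma cube_inv {U : ℚ⟦X⟧} (hU0 : constantCoeff U = 0) :
    (1 - U ^ 3) * (1 - U ^ 3)⁻¹ = 1 :=
  PowerSeries.mul_inv_cancel _ (by rw [map_sub, map_one, map_pow, hU0]; norm_num)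

lemma cube_ne {U : ℚ⟦X⟧} (hU0 : constantCoeff U = 0) : (1 - U ^ 3) ≠ 0 := by
  intro h
  have := congrArg (constantCoeff) h
  rw [map_sub, map_one, map_pow, hU0, map_zero] at this
  norm_num at this

lemma inv_split {U : ℚ⟦X⟧} (hU0 : constantCoeff U = 0) (m : ℕ) :
    (1 - U ^ 3)⁻¹ = (∑ j ∈ Finset.range (m + 1), (U ^ 3) ^ j)
      + (U ^ 3) ^ (m + 1) * (1 - U ^ 3)⁻¹ := by
  have geom := geom_sum_mul (U ^ 3) (m + 1)
  apply mul_left_cancel₀ (cube_ne hU0)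
  linear_combination (1 - (U ^ 3) ^ (m + 1)) * cube_inv hU0 + geom

lemma coeff_tail_vanish {U : ℚ⟦X⟧} (hU0 : constantCoeff U = 0)
    (hU : U = X * (1 + U) ^ 2) (m : ℕ) (h : ℚ⟦X⟧) :
    coeff m ((U ^ 3) ^ (m + 1) * h) = 0 := by
  have hUj : (U ^ 3) ^ (m + 1) = X ^ (3 * (m + 1)) * (1 + U) ^ (6 * (m + 1)) := by
    conv_lhs => rw [hU]
    rw [← pow_mul, mul_pow, ← pow_mul, show 2 * (3 * (m + 1)) = 6 * (m + 1) by ring]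
  rw [hUj, mul_assoc, PowerSeries.coeff_X_pow_mul', if_neg (by omega)]

/-- The family `(P⁽ⁱ⁾(t)³)_{i odd}` is summable (for each exponent only finitely many
members have a nonzero coefficient of that exponent), and its sum is
`2·B³·(1+U)³·(1−U³)⁻¹`, where `U` is the unique series with zero constant coefficient
satisfying `U = t(1+U)²` and `B = (1+U)(1−U)⁻¹`. -/
theorem sum_odd_P_cubed :
    ∀ U : PowerSeries ℚ,
      PowerSeries.constantCoeff U = 0 → U = PowerSeries.X * (1 + U) ^ 2 →
      (∀ m : ℕ, {i : ℤ | Odd i ∧ PowerSeries.coeff m (P i ^ 3) ≠ 0}.Finite) ∧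
      (∀ m : ℕ,
        (∑ᶠ (i : ℤ) (_ : Odd i), PowerSeries.coeff m (P i ^ 3)) =
          PowerSeries.coeff m
            (2 * ((1 + U) * (1 - U)⁻¹) ^ 3 * (1 + U) ^ 3 * (1 - U ^ 3)⁻¹)) := by
  intro U hU0 hU
  have hbound : ∀ m : ℕ, ∀ i : ℤ, Odd i → coeff m (P i ^ 3) ≠ 0 →
      i ∈ (((Finset.range (m + 1)).image fun j : ℕ => (2 * (j : ℤ) + 1)) ∪
        ((Finset.range (m + 1)).image fun j : ℕ => (-(2 * (j : ℤ) + 1)))) := by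
    intro m i hodd hne
    obtain ⟨j, hij⟩ := odd_rep hodd
    have hj : j ≤ m := by
      by_contra hc
      exact hne (coeff_P_cube_vanish hU0 hU hij (by omega))
    rcases hij with h | h
    · exact Finset.mem_union_left _
        (Finset.mem_image.2 ⟨j, Finset.mem_range.2 (by omega), h.symm⟩)
    · exact Finset.mem_union_right _
        (Finset.mem_image.2 ⟨j, Finset.mem_range.2 (by omega), h.symm⟩)
  constructor
  · intro m
    apply Set.Finite.subset (Finset.finite_toSet
      (((Finset.range (m + 1)).image fun j : ℕ => (2 * (j : ℤ) + 1)) ∪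
        ((Finset.range (m + 1)).image fun j : ℕ => (-(2 * (j : ℤ) + 1)))))
    intro i hi
    exact hbound m i hi.1 hi.2
  · intro m
    have hsum : (∑ᶠ (i : ℤ) (_ : Odd i), coeff m (P i ^ 3))
        = ∑ i ∈ (((Finset.range (m + 1)).image fun j : ℕ => (2 * (j : ℤ) + 1)) ∪
            ((Finset.range (m + 1)).image fun j : ℕ => (-(2 * (j : ℤ) + 1)))),
          coeff m (P i ^ 3) := by
      apply finsum_cond_eq_sum_of_cond_iff
      intro i hne
      constructor
      · intro hodd; exact hbound m i hodd hne
      · intro hT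
        rcases Finset.mem_union.1 hT with h | h <;>
          obtain ⟨j, _, rfl⟩ := Finset.mem_image.1 h
        · exact Int.odd_iff.2 (by omega)
        · exact Int.odd_iff.2 (by omega)
    rw [hsum]
    have hdisj : Disjoint ((Finset.range (m + 1)).image fun j : ℕ => (2 * (j : ℤ) + 1))
        ((Finset.range (m + 1)).image fun j : ℕ => (-(2 * (j : ℤ) + 1))) := by
      rw [Finset.disjoint_left]
      intro a ha hb
      obtain ⟨j, _, hj⟩ := Finset.mem_image.1 ha
      obtain ⟨j', _, hj'⟩ := Finset.mem_image.1 hb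
      omega
    rw [Finset.sum_union hdisj,
      Finset.sum_image (by intro x _ y _ h; beta_reduce at h; omega),
      Finset.sum_image (by intro x _ y _ h; beta_reduce at h; omega),
      ← Finset.sum_add_distrib]
    conv_rhs => rw [inv_split hU0 m]
    rw [mul_add, map_add]
    have htail : 2 * ((1 + U) * (1 - U)⁻¹) ^ 3 * (1 + U) ^ 3 * ((U ^ 3) ^ (m + 1) * (1 - U ^ 3)⁻¹)
        = (U ^ 3) ^ (m + 1) * (2 * ((1 + U) * (1 - U)⁻¹) ^ 3 * (1 + U) ^ 3 * (1 - U ^ 3)⁻¹) := by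
      ring
    rw [htail, coeff_tail_vanish hU0 hU, add_zero, Finset.mul_sum, map_sum]
    apply Finset.sum_congr rfl
    intro j _
    rw [P_cube hU0 hU (Or.inl rfl), P_cube hU0 hU (Or.inr rfl)]
    have hterm : 2 * ((1 + U) * (1 - U)⁻¹) ^ 3 * (1 + U) ^ 3 * (U ^ 3) ^ j
        = ((1 + U) * (1 - U)⁻¹) ^ 3 * (1 + U) ^ 3 * (U ^ 3) ^ j
          + ((1 + U) * (1 - U)⁻¹) ^ 3 * (1 + U) ^ 3 * (U ^ 3) ^ j := by
      ring
    rw [hterm, map_add]
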